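/- Let n ≥ 2, let M be the n×n complex matrix with first column (2, a_1, …, a_{n-1})ᵀ and all other entries 0, and let t = πik for some integer k. Then exp(tM) = Id. -/

import Mathlib

/-!
Only the first column of `M` is nonzero, so `M * M = M₀₀ • M = 2 • M`. Whenever `A * A = c • A`
we have `A ^ (m + 1) = c ^ m • A`, so the exponential series of `c • exp A` and `exp c • A` agree
beyond the constant term: `c • (exp A - 1) = (exp c - 1) • A`. For `A = t • M` and `c = 2 * t`
this gives `exp A = 1`, because `exp (2 * t) = exp (2 * π * i * k) = 1`.
-/

open NormedSpace

theorem Matrix.mul_self_eq_smul_of_eq_zero_off_col {ι R : Type*} [Fintype ι] [CommSemiring R]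
    (M : Matrix ι ι R) (j₀ : ι) (hM : ∀ i j, j ≠ j₀ → M i j = 0) :
    M * M = M j₀ j₀ • M := by
  ext i j
  rw [Matrix.mul_apply, Finset.sum_eq_single j₀ (fun k _ hk => by rw [hM i k hk, zero_mul])
    (fun h => (h (Finset.mem_univ _)).elim), Matrix.smul_apply, smul_eq_mul]
  by_cases hj : j = j₀
  · subst hj
    exact mul_comm _ _
  · rw [hM _ _ hj, hM _ _ hj, mul_zero, mul_zero]

section QuasiIdempotent

variable {𝕂 𝔸 : Type*} [RCLike 𝕂] [NormedRing 𝔸] [NormedAlgebra 𝕂 𝔸] [CompleteSpace 𝔸]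

theorem smul_exp_sub_one_of_mul_self_eq_smul {A : 𝔸} {c : 𝕂} (hA : A * A = c • A) :
    c • (exp A - 1) = (exp c - 1) • A := by
  have hpow : ∀ m : ℕ, c • A ^ (m + 1) = c ^ (m + 1) • A := by
    intro m
    induction m with
    | zero => rw [zero_add, pow_one, pow_one]
    | succ m ih => rw [pow_succ, ← smul_mul_assoc, ih, smul_mul_assoc, hA, smul_smul, ← pow_succ]
  have hleft : HasSum (fun m : ℕ => (m.factorial⁻¹ : 𝕂) • (c • A ^ m)) (c • exp A) := by
    simpa only [smul_comm c] using (exp_series_hasSum_exp' (𝕂 := 𝕂) A).const_smul c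
  have hright : HasSum (fun m : ℕ => (m.factorial⁻¹ : 𝕂) • (c ^ m • A)) (exp c • A) := by
    simpa only [smul_smul, smul_eq_mul] using (exp_series_hasSum_exp' (𝕂 := 𝕂) c).smul_const A
  have hdiff := hleft.sub hright
  simp only [← smul_sub] at hdiff
  have hsingle := hasSum_single (f := fun m : ℕ => (m.factorial⁻¹ : 𝕂) • (c • A ^ m - c ^ m • A))
    0 fun m hm => by
      obtain ⟨m, rfl⟩ := Nat.exists_eq_succ_of_ne_zero hm
      rw [hpow, sub_self, smul_zero]
  have hconst := hdiff.unique hsingle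
  simp only [Nat.factorial_zero, Nat.cast_one, inv_one, one_smul, pow_zero] at hconst
  rw [smul_sub, sub_smul, one_smul, sub_eq_sub_iff_sub_eq_sub, hconst]

theorem exp_eq_one_of_mul_self_eq_smul {A : 𝔸} {c : 𝕂} (hA : A * A = c • A) (hc : c ≠ 0)
    (hexp : exp c = 1) : exp A = 1 := by
  have h := smul_exp_sub_one_of_mul_self_eq_smul hA
  rw [hexp, sub_self, zero_smul, smul_eq_zero] at h
  exact sub_eq_zero.mp (h.resolve_left hc)

end QuasiIdempotent

/-- Let `n ≥ 2`, let `M` be the `n × n` complex matrix with first column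
`(2, a₁, …, a_{n-1})ᵀ` and all other entries `0`, and let `t = π i k` for an integer `k`.
Then `exp (t • M) = Id`. -/
theorem stmt_2 (n : ℕ) (hn : 2 ≤ n) (M : Matrix (Fin n) (Fin n) ℂ)
    (h11 : M ⟨0, by omega⟩ ⟨0, by omega⟩ = 2)
    (hcol : ∀ i j : Fin n, (j : ℕ) ≠ 0 → M i j = 0)
    (k : ℤ) (t : ℂ) (ht : t = Real.pi * Complex.I * k) :
    exp (t • M) = 1 := by
  -- any submultiplicative norm inducing the product topology makes the exponential series summable
  let : NormedRing (Matrix (Fin n) (Fin n) ℂ) := Matrix.linftyOpNormedRing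
  let : NormedAlgebra ℂ (Matrix (Fin n) (Fin n) ℂ) := Matrix.linftyOpNormedAlgebra
  rcases eq_or_ne t 0 with rfl | ht0
  · rw [zero_smul, exp_zero]
  have hM : M * M = (2 : ℂ) • M := by
    rw [← h11]
    exact M.mul_self_eq_smul_of_eq_zero_off_col _ fun i j hj => hcol i j fun h => hj (Fin.ext h)
  refine exp_eq_one_of_mul_self_eq_smul (c := 2 * t) ?_ (mul_ne_zero two_ne_zero ht0) ?_
  · rw [smul_mul_smul_comm, hM, smul_smul, smul_smul]
    ring_nf
  · rw [← Complex.exp_eq_exp_ℂ, ht, ← Complex.exp_int_mul_two_pi_mul_I k]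
    ring_nf
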